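/- The operator L = (N-x)T⁺ + (x-N-α-1)I acts on the R_I Hahn polynomials by shifting parameters: L P_n(x; α, β, N) = -[(α+1)(1-β)/(1-β-n)] P_n(x; α+1, β-1, N), as polynomials in x. -/

import Mathlib

noncomputable def poch (a : ℝ) (n : ℕ) : ℝ := ∏ i ∈ Finset.range n, (a + i)

/-- The R_I polynomial of Hahn type P_n(x; α, β, N). -/
noncomputable def P (α β : ℝ) (N n : ℕ) (x : ℝ) : ℝ :=
  ∑ k ∈ Finset.range (n + 1),
    poch (-(n : ℝ)) k * poch (α + 1) k /
      ((Nat.factorial k : ℝ) * poch (-(N : ℝ)) k * poch (1 - β - n) k) * poch (-x) k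

/-!
In the basis `(-x)_k` the operator is diagonal plus lowering:
`L (-x)_k = -(α + 1 + k) (-x)_k - k (N - k + 1) (-x)_{k-1}`.
So the `k`-th coefficient of `L P_n` is `-(α + 1 + k) c_k - (k + 1)(N - k) c_{k+1}`, and the
hypergeometric ratio `c_{k+1} / c_k` turns it into `-(α + 1 + k)(1 - β)/(1 - β - n + k) c_k`,
which is the claimed multiple of the `k`-th coefficient of `P_n(x; α + 1, β - 1, N)`.
The top term needs no ratio: `c_{n+1} = 0` because `(-n)_{n+1} = 0`.
-/

open Finset

lemma poch_zero (a : ℝ) : poch a 0 = 1 := prod_range_zero _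

lemma poch_succ (a : ℝ) (k : ℕ) : poch a (k + 1) = poch a k * (a + k) := prod_range_succ _ _

lemma poch_succ' (a : ℝ) (k : ℕ) : poch a (k + 1) = a * poch (a + 1) k := by
  rw [poch, prod_range_succ', mul_comm, poch]
  simp only [Nat.cast_zero, add_zero]
  exact congrArg _ (prod_congr rfl fun i _ => by push_cast; ring)

lemma poch_mul_add (a : ℝ) (k : ℕ) : a * poch (a + 1) k = poch a k * (a + k) := by
  rw [← poch_succ', poch_succ]

lemma add_ne_zero_of_poch_succ_ne_zero {a : ℝ} {k : ℕ} (h : poch a (k + 1) ≠ 0) : a + k ≠ 0 :=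
  right_ne_zero_of_mul (poch_succ a k ▸ h)

lemma poch_neg_nat_succ_self (n : ℕ) : poch (-(n : ℝ)) (n + 1) = 0 := by
  simp [poch_succ]

lemma add_ne_zero_of_poch_ne_zero {b : ℝ} {n k : ℕ} (hb : b ≠ 0)
    (hpoch : ∀ j ≤ n, poch b j ≠ 0) (hpoch' : ∀ j ≤ n, poch (b + 1) j ≠ 0) (hk : k ≤ n) :
    b + k ≠ 0 := by
  rcases hk.lt_or_eq with hlt | rfl
  · exact add_ne_zero_of_poch_succ_ne_zero (hpoch (k + 1) hlt)
  · cases k with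
    | zero => simpa using hb
    | succ m =>
      have := add_ne_zero_of_poch_succ_ne_zero (hpoch' (m + 1) le_rfl)
      push_cast
      rwa [add_right_comm, add_assoc] at this

noncomputable def hahnCoeff (α β : ℝ) (N n k : ℕ) : ℝ :=
  poch (-(n : ℝ)) k * poch (α + 1) k /
    ((Nat.factorial k : ℝ) * poch (-(N : ℝ)) k * poch (1 - β - n) k)

lemma P_eq_sum_hahnCoeff (α β : ℝ) (N n : ℕ) (x : ℝ) :
    P α β N n x = ∑ k ∈ range (n + 1), hahnCoeff α β N n k * poch (-x) k := rfl

section HahnCoeff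

variable (α β : ℝ) (N n : ℕ)

lemma hahnCoeff_succ_self : hahnCoeff α β N n (n + 1) = 0 := by
  simp [hahnCoeff, poch_neg_nat_succ_self]

lemma hahnCoeff_succ {k : ℕ} (hk : k ≤ n) (hn : n ≤ N) :
    (k + 1) * (N - k) * hahnCoeff α β N n (k + 1)
      = (n - k) * (α + 1 + k) / (1 - β - n + k) * hahnCoeff α β N n k := by
  rcases hk.lt_or_eq with hlt | rfl
  · have hkN : (-N + k : ℝ) ≠ 0 := by
      have : (k : ℝ) < N := by exact_mod_cast hlt.trans_le hn
      linarith
    simp only [hahnCoeff, poch_succ, Nat.factorial_succ]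
    push_cast
    field_simp
    congr 1
    ring
  · simp [hahnCoeff_succ_self]

lemma hahnCoeff_shift (k : ℕ) :
    (α + 1) * (1 - β) / (1 - β - n) * hahnCoeff (α + 1) (β - 1) N n k
      = (1 - β) * (α + 1 + k) / (1 - β - n + k) * hahnCoeff α β N n k := by
  have ha := poch_mul_add (α + 1) k
  have hb := poch_mul_add (1 - β - n) k
  rw [show 1 - β - n + 1 = 1 - (β - 1) - n by ring] at hb
  calc _ = (1 - β) * poch (-(n : ℝ)) k * ((α + 1) * poch (α + 1 + 1) k) /
        ((Nat.factorial k : ℝ) * poch (-(N : ℝ)) k * ((1 - β - n) * poch (1 - (β - 1) - n) k)) := by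
          simp only [hahnCoeff, div_eq_mul_inv, mul_inv]; ring
    _ = _ := by rw [ha, hb]; simp only [hahnCoeff, div_eq_mul_inv, mul_inv]; ring

lemma hahnCoeff_lowering {k : ℕ} (hk : k ≤ n) (hn : n ≤ N) (hb : 1 - β - n + k ≠ 0) :
    -(α + 1 + k) * hahnCoeff α β N n k - (k + 1) * (N - k) * hahnCoeff α β N n (k + 1)
      = -((α + 1) * (1 - β) / (1 - β - n)) * hahnCoeff (α + 1) (β - 1) N n k := by
  rw [hahnCoeff_succ α β N n hk hn, neg_mul ((α + 1) * (1 - β) / (1 - β - n)), hahnCoeff_shift]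
  field_simp
  ring

end HahnCoeff

def shiftOperator (N α : ℝ) (f : ℝ → ℝ) (x : ℝ) : ℝ :=
  (N - x) * f (x + 1) + (x - N - α - 1) * f x

lemma shiftOperator_sum (N α : ℝ) (s : Finset ℕ) (c : ℕ → ℝ) (f : ℕ → ℝ → ℝ) (x : ℝ) :
    shiftOperator N α (fun y => ∑ k ∈ s, c k * f k y) x
      = ∑ k ∈ s, c k * shiftOperator N α (f k) x := by
  simp only [shiftOperator, mul_sum, ← sum_add_distrib]
  exact sum_congr rfl fun k _ => by ring

lemma shiftOperator_poch_neg (N α x : ℝ) (k : ℕ) :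
    shiftOperator N α (fun y => poch (-y) k) x
      = -(α + 1 + k) * poch (-x) k - k * (N - k + 1) * poch (-x) (k - 1) := by
  cases k with
  | zero => simp only [shiftOperator, poch_zero]; push_cast; ring
  | succ k =>
    simp only [shiftOperator, poch_succ' (-(x + 1)), poch_succ (-x), Nat.add_sub_cancel]
    rw [show -(x + 1) + 1 = -x by ring]
    push_cast
    ring

lemma sum_lowering_reindex (N : ℝ) (n : ℕ) (c e : ℕ → ℝ) (hc : c (n + 1) = 0) :
    ∑ k ∈ range (n + 1), c k * (k * (N - k + 1) * e (k - 1))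
      = ∑ k ∈ range (n + 1), (k + 1) * (N - k) * c (k + 1) * e k := by
  rw [sum_range_succ', sum_range_succ _ n, hc]
  simp only [Nat.cast_zero, zero_mul, mul_zero, add_zero, Nat.add_sub_cancel, Nat.cast_add,
    Nat.cast_one]
  exact sum_congr rfl fun k _ => by ring

theorem stmt13_general (N n : ℕ) (α β : ℝ) (hn : n ≤ N)
    (h1 : (1 - β - (n : ℝ)) ≠ 0)
    (h2 : ∀ k ≤ n, poch (1 - β - (n : ℝ)) k ≠ 0)
    (h3 : ∀ k ≤ n, poch (1 - (β - 1) - (n : ℝ)) k ≠ 0) :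
    ∀ x : ℝ,
      ((N : ℝ) - x) * P α β N n (x + 1) + (x - N - α - 1) * P α β N n x
        = -((α + 1) * (1 - β) / (1 - β - (n : ℝ))) * P (α + 1) (β - 1) N n x := by
  intro x
  have h3' : ∀ k ≤ n, poch (1 - β - n + 1) k ≠ 0 := fun k hk => by
    convert h3 k hk using 2; ring
  calc _ = shiftOperator N α (fun y => ∑ k ∈ range (n + 1), hahnCoeff α β N n k * poch (-y) k) x :=
        rfl
    _ = ∑ k ∈ range (n + 1), hahnCoeff α β N n k * (-(α + 1 + k) * poch (-x) k)
          - ∑ k ∈ range (n + 1), hahnCoeff α β N n k * (k * (N - k + 1) * poch (-x) (k - 1)) := by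
        simp only [shiftOperator_sum, shiftOperator_poch_neg, mul_sub, sum_sub_distrib]
    _ = ∑ k ∈ range (n + 1), (-(α + 1 + k) * hahnCoeff α β N n k
          - (k + 1) * (N - k) * hahnCoeff α β N n (k + 1)) * poch (-x) k := by
        rw [sum_lowering_reindex _ _ _ _ (hahnCoeff_succ_self α β N n), ← sum_sub_distrib]
        exact sum_congr rfl fun k _ => by ring
    _ = _ := by
        rw [P_eq_sum_hahnCoeff, mul_sum]
        refine sum_congr rfl fun k hmem => ?_
        have hk : k ≤ n := Nat.lt_succ_iff.mp (mem_range.mp hmem)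
        rw [hahnCoeff_lowering α β N n hk hn (add_ne_zero_of_poch_ne_zero h1 h2 h3' hk), mul_assoc]

theorem stmt13 (N n : ℕ) (α β : ℝ) (hn : n ≤ N)
    (h1 : (1 - β - (n : ℝ)) ≠ 0)
    (h2 : ∀ k ≤ n, poch (1 - β - (n : ℝ)) k ≠ 0)
    (h3 : ∀ k ≤ n, poch (1 - (β - 1) - (n : ℝ)) k ≠ 0)
    (h4 : ∀ k ≤ n, poch (-(N : ℝ)) k ≠ 0) :
    ∀ x : ℝ,
      ((N : ℝ) - x) * P α β N n (x + 1) + (x - N - α - 1) * P α β N n x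
        = -((α + 1) * (1 - β) / (1 - β - (n : ℝ))) * P (α + 1) (β - 1) N n x :=
  stmt13_general N n α β hn h1 h2 h3
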